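/- Let M ≥ 2 be an integer and let φ, θ, η, ϑ be real angles with θ, ϑ ∈ [−π/2, π/2]. Then the sUPA array factor satisfies f(φ,θ;η,ϑ) = 0 if and only if there exists a nonzero integer p with cos θ·sin(φ−η) = 2p/M, or there exists a nonzero integer q with sin θ·cos ϑ − cos θ·sin ϑ·cos(φ−η) = 2q/M. (Since both arguments have absolute value at most 1, any such p and q automatically satisfy |p| ≤ M/2 and |q| ≤ M/2.) -/

import Mathlib

/-!
`H_M(x)` is `1/M` times the geometric sum `∑_{m<M} rᵐ` with `r = exp(iπx)`, so it vanishes exactly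
when `r ≠ 1` and `r^M = 1`, i.e. when `x` is not an even integer but `Mx` is. Both arguments of the
array factor lie in `[-1, 1]` (the second by Cauchy–Schwarz), where the only even integer is `0`;
hence the zeros are the points `2p/M` with `p ≠ 0`.
-/

open Real Complex Finset

/-- The Dirichlet kernel `H_M(x) = (1/M) ∑_{m=0}^{M-1} exp(iπ m x)`. -/
noncomputable def dirichletKernel (M : ℕ) (x : ℝ) : ℂ :=
  (1 / (M : ℂ)) * ∑ m ∈ Finset.range M, Complex.exp (Complex.I * (Real.pi : ℂ) * (m : ℂ) * (x : ℂ))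

/-- The sUPA array factor
`f(φ,θ;η,ϑ) = M² H_M(cos θ sin(φ−η)) H_M(sin θ cos ϑ − cos θ sin ϑ cos(φ−η))`. -/
noncomputable def sUPAFactor (M : ℕ) (φ θ η ϑ : ℝ) : ℂ :=
  (M : ℂ) ^ 2 * dirichletKernel M (Real.cos θ * Real.sin (φ - η)) *
    dirichletKernel M (Real.sin θ * Real.cos ϑ - Real.cos θ * Real.sin ϑ * Real.cos (φ - η))

theorem geom_sum_eq_zero_iff_of_ne_zero {K : Type*} [Field K] [CharZero K] {r : K} {M : ℕ}
    (hM : M ≠ 0) : ∑ m ∈ range M, r ^ m = 0 ↔ r ≠ 1 ∧ r ^ M = 1 := by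
  by_cases hr : r = 1
  · simp [hr, hM]
  · rw [geom_sum_eq hr, div_eq_zero_iff, sub_eq_zero, sub_eq_zero]
    tauto

theorem exp_I_pi_mul_eq_one_iff (x : ℝ) :
    Complex.exp (I * π * x) = 1 ↔ ∃ n : ℤ, x = 2 * n := by
  rw [Complex.exp_eq_one_iff]
  refine exists_congr fun n => ?_
  have hIπ : I * (π : ℂ) ≠ 0 := mul_ne_zero I_ne_zero (ofReal_ne_zero.mpr pi_ne_zero)
  rw [show (n : ℂ) * (2 * π * I) = I * π * ((2 * n : ℝ) : ℂ) by push_cast; ring,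
    mul_right_inj' hIπ, ofReal_inj]

theorem dirichletKernel_eq_geom_sum (M : ℕ) (x : ℝ) :
    dirichletKernel M x = (1 / (M : ℂ)) * ∑ m ∈ range M, Complex.exp (I * π * x) ^ m := by
  unfold dirichletKernel
  congr 1
  refine sum_congr rfl fun m _ => ?_
  rw [← Complex.exp_nat_mul]
  ring_nf

theorem dirichletKernel_eq_zero_iff_of_ne_zero {M : ℕ} (hM : M ≠ 0) (x : ℝ) :
    dirichletKernel M x = 0 ↔ (¬∃ n : ℤ, x = 2 * n) ∧ ∃ p : ℤ, M * x = 2 * p := by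
  have hpow : Complex.exp (I * π * x) ^ M = Complex.exp (I * π * ((M * x : ℝ) : ℂ)) := by
    rw [← Complex.exp_nat_mul]
    push_cast
    ring_nf
  rw [dirichletKernel_eq_geom_sum, mul_eq_zero, geom_sum_eq_zero_iff_of_ne_zero hM, hpow,
    exp_I_pi_mul_eq_one_iff, ne_eq, exp_I_pi_mul_eq_one_iff x]
  simp [hM]

theorem dirichletKernel_eq_zero_iff {M : ℕ} (hM : M ≠ 0) {x : ℝ} (hx : |x| < 2) :
    dirichletKernel M x = 0 ↔ ∃ p : ℤ, p ≠ 0 ∧ x = 2 * p / M := by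
  have hMR : (M : ℝ) ≠ 0 := Nat.cast_ne_zero.mpr hM
  have heven_iff : (∃ n : ℤ, x = 2 * n) ↔ x = 0 := by
    constructor
    · rintro ⟨n, rfl⟩
      have hn : |n| < 1 := by
        rw [abs_mul, abs_two] at hx
        exact_mod_cast (by linarith : |(n : ℝ)| < 1)
      simp [Int.abs_lt_one_iff.mp hn]
    · rintro rfl
      exact ⟨0, by simp⟩
  rw [dirichletKernel_eq_zero_iff_of_ne_zero hM, heven_iff]
  constructor
  · rintro ⟨hx0, p, hp⟩
    refine ⟨p, ?_, by rw [← hp]; field_simp⟩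
    rintro rfl
    exact hx0 (by simpa [hMR] using hp)
  · rintro ⟨p, hp0, rfl⟩
    refine ⟨by simp [hp0, hMR], p, by field_simp⟩

theorem abs_sin_mul_cos_sub_cos_mul_sin_mul_cos_le_one (θ ϑ ψ : ℝ) :
    |Real.sin θ * Real.cos ϑ - Real.cos θ * Real.sin ϑ * Real.cos ψ| ≤ 1 := by
  rw [← sq_le_one_iff_abs_le_one]
  have lagrange : (Real.sin θ * Real.cos ϑ - Real.cos θ * Real.sin ϑ * Real.cos ψ) ^ 2 +
      (Real.sin θ * Real.sin ϑ * Real.cos ψ + Real.cos θ * Real.cos ϑ) ^ 2 =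
      Real.cos ϑ ^ 2 + Real.sin ϑ ^ 2 * Real.cos ψ ^ 2 := by
    linear_combination
      (Real.cos ϑ ^ 2 + Real.sin ϑ ^ 2 * Real.cos ψ ^ 2) * Real.sin_sq_add_cos_sq θ
  nlinarith [Real.sin_sq_add_cos_sq ϑ,
    sq_nonneg (Real.sin θ * Real.sin ϑ * Real.cos ψ + Real.cos θ * Real.cos ϑ),
    mul_nonneg (sq_nonneg (Real.sin ϑ)) (sub_nonneg.mpr (Real.cos_sq_le_one ψ))]

theorem sUPAFactor_eq_zero_iff_general (M : ℕ) (hM : 2 ≤ M) (φ θ η ϑ : ℝ) :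
    sUPAFactor M φ θ η ϑ = 0 ↔
      (∃ p : ℤ, p ≠ 0 ∧ Real.cos θ * Real.sin (φ - η) = 2 * p / M) ∨
      (∃ q : ℤ, q ≠ 0 ∧
        Real.sin θ * Real.cos ϑ - Real.cos θ * Real.sin ϑ * Real.cos (φ - η) = 2 * q / M) := by
  have hM0 : M ≠ 0 := by omega
  have hx : |Real.cos θ * Real.sin (φ - η)| < 2 := by
    rw [abs_mul]
    exact (mul_le_one₀ (abs_cos_le_one θ) (abs_nonneg _) (abs_sin_le_one _)).trans_lt one_lt_two
  have hy := (abs_sin_mul_cos_sub_cos_mul_sin_mul_cos_le_one θ ϑ (φ - η)).trans_lt one_lt_two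
  rw [sUPAFactor, mul_assoc, mul_eq_zero, mul_eq_zero, ← dirichletKernel_eq_zero_iff hM0 hx,
    ← dirichletKernel_eq_zero_iff hM0 hy]
  simp [hM0]

/-- For `M ≥ 2` and `θ, ϑ ∈ [−π/2, π/2]`, the sUPA array factor vanishes iff
`cos θ sin(φ−η) = 2p/M` for some nonzero integer `p`, or
`sin θ cos ϑ − cos θ sin ϑ cos(φ−η) = 2q/M` for some nonzero integer `q`. -/
theorem sUPAFactor_eq_zero_iff (M : ℕ) (hM : 2 ≤ M) (φ θ η ϑ : ℝ)
    (hθ : θ ∈ Set.Icc (-(Real.pi / 2)) (Real.pi / 2))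
    (hϑ : ϑ ∈ Set.Icc (-(Real.pi / 2)) (Real.pi / 2)) :
    sUPAFactor M φ θ η ϑ = 0 ↔
      (∃ p : ℤ, p ≠ 0 ∧ Real.cos θ * Real.sin (φ - η) = 2 * p / M) ∨
      (∃ q : ℤ, q ≠ 0 ∧
        Real.sin θ * Real.cos ϑ - Real.cos θ * Real.sin ϑ * Real.cos (φ - η) = 2 * q / M) :=
  sUPAFactor_eq_zero_iff_general M hM φ θ η ϑ
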